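/- Let γ̃^i_j satisfy (★) on U and let g_i : U → ℂ be nonvanishing holomorphic functions such that ∂_j g_i = 2 γ̃^i_j g_i for all j ≠ i and ∂_i g_i = −2 (Σ_{k≠i} γ̃^i_k) g_i. Then: (i) the Darboux–Tsarev system holds: for all pairwise distinct i,j,k, −∂_j Γ̂^k_{ii} + Γ̂^k_{ii} Γ̂^i_{ij} − Γ̂^k_{jj} Γ̂^j_{ii} − Γ̂^k_{kj} Γ̂^k_{ii} = 0; and (ii) the unit vector field is Killing: Σ_{k=1}^N ∂_k g_i = 0 for all i. -/

import Mathlib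

noncomputable section

variable {N : ℕ}

/-- The partial derivative `∂_k = ∂/∂u^k` of a function of `N` complex variables. -/
def pder (k : Fin N) (f : (Fin N → ℂ) → ℂ) : (Fin N → ℂ) → ℂ :=
  fun u => fderiv ℂ f u (Pi.single k 1)

/-- Kronecker delta. -/
def kron (i j : Fin N) : ℂ := if i = j then 1 else 0

/-- The system (★) for the functions `γ̃^i_j` (`i ≠ j`) on `U`. -/
def StarSystem (U : Set (Fin N → ℂ)) (γ : Fin N → Fin N → (Fin N → ℂ) → ℂ) : Prop :=
  (∀ i j k : Fin N, i ≠ j → j ≠ k → i ≠ k → ∀ u ∈ U,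
      pder k (γ i j) u =
        -(γ i j u * γ i k u) + γ i j u * γ j k u + γ i k u * γ k j u) ∧
  (∀ i j : Fin N, i ≠ j → ∀ u ∈ U, ∑ k, pder k (γ i j) u = 0)

/-- Christoffel symbols `Γ^i_{jk}` of the flat F-manifold connection in canonical coordinates,
associated to a solution `γ̃` of (★):  `Γ^i_{jk} = 0` for pairwise distinct `i,j,k`;
`Γ^i_{ij} = Γ^i_{ji} = γ̃^i_j` and `Γ^i_{jj} = −γ̃^i_j` for `i ≠ j`;
`Γ^i_{ii} = −Σ_{k≠i} γ̃^i_k`. -/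
def Gam (γ : Fin N → Fin N → (Fin N → ℂ) → ℂ) (i j k : Fin N) : (Fin N → ℂ) → ℂ :=
  if i = j ∧ i = k then fun u => -∑ l ∈ Finset.univ.erase i, γ i l u
  else if i = j then γ i k
  else if i = k then γ i j
  else if j = k then fun u => -(γ i j u)
  else 0

/-- The Levi-Civita Christoffel symbols `Γ̂^i_{jk}` of the diagonal metric `Σ_i g_i (du^i)²`:
`Γ̂^i_{jk} = 0` for pairwise distinct `i,j,k`; `Γ̂^i_{ij} = Γ̂^i_{ji} = (∂_j g_i)/(2 g_i)` for all
`i,j`; `Γ̂^j_{ii} = −(∂_j g_i)/(2 g_j)` for `i ≠ j`. -/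
def GamLC (g : Fin N → (Fin N → ℂ) → ℂ) (i j k : Fin N) : (Fin N → ℂ) → ℂ :=
  if i = j then fun u => pder k (g i) u / (2 * g i u)
  else if i = k then fun u => pder j (g i) u / (2 * g i u)
  else if j = k then fun u => -(pder i (g j) u / (2 * g i u))
  else 0

/-!
Write `Γ̂` for `GamLC g`. The hypotheses on `g` say `∂_j g_i / (2 g_i) = γ̃^i_j` for `j ≠ i`, so
`Γ̂^i_{ij} = γ̃^i_j` and `Γ̂^k_{ii} = -γ̃^i_k g_i / g_k`. Differentiating the latter along `u^j` by the
quotient rule and replacing `∂_j γ̃^i_k` by its value from (★), every term of the Darboux–Tsarev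
expression becomes `g_i / g_k` times a quadratic monomial in the `γ̃`, and these cancel in pairs.
The Killing equation is the sum of the hypotheses on `∂_k g_i` over all `k`.
-/

section Calculus

variable {j : Fin N} {f h : (Fin N → ℂ) → ℂ} {u : Fin N → ℂ}

lemma pder_congr_of_eqOn {U : Set (Fin N → ℂ)} (hU : IsOpen U) (hu : u ∈ U) (hfh : U.EqOn f h) :
    pder j f u = pder j h u := by
  unfold pder
  rw [Filter.EventuallyEq.fderiv_eq (Filter.eventuallyEq_of_mem (hU.mem_nhds hu) hfh)]

lemma pder_neg : pder j (fun v => -f v) u = -pder j f u := by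
  simp [pder, fderiv_fun_neg]

lemma pder_mul (hf : DifferentiableAt ℂ f u) (hh : DifferentiableAt ℂ h u) :
    pder j (fun v => f v * h v) u = pder j f u * h u + f u * pder j h u := by
  simp only [pder, fderiv_fun_mul hf hh, add_apply, smul_apply, smul_eq_mul]
  ring

lemma pder_inv (hh : DifferentiableAt ℂ h u) (hz : h u ≠ 0) :
    pder j (fun v => (h v)⁻¹) u = -pder j h u / h u ^ 2 := by
  have hcomp : (fun v => (h v)⁻¹) = Inv.inv ∘ h := rfl
  simp only [pder, hcomp, ((hasFDerivAt_inv' hz).comp u hh.hasFDerivAt).fderiv,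
    ContinuousLinearMap.coe_comp, Function.comp_apply, neg_apply,
    ContinuousLinearMap.mulLeftRight_apply]
  field_simp

lemma pder_div (hf : DifferentiableAt ℂ f u) (hh : DifferentiableAt ℂ h u) (hz : h u ≠ 0) :
    pder j (fun v => f v / h v) u = (pder j f u * h u - f u * pder j h u) / h u ^ 2 := by
  simp only [div_eq_mul_inv]
  rw [pder_mul (h := fun v => (h v)⁻¹) hf (hh.inv hz), pder_inv hh hz]
  field_simp
  ring

end Calculus

section DiagonalMetric

variable {U : Set (Fin N → ℂ)} {γ : Fin N → Fin N → (Fin N → ℂ) → ℂ} {g : Fin N → (Fin N → ℂ) → ℂ}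

lemma GamLC_self (i j : Fin N) (v : Fin N → ℂ) :
    GamLC g i i j v = pder j (g i) v / (2 * g i v) := by
  simp [GamLC]

lemma GamLC_of_ne {k i : Fin N} (hki : k ≠ i) (v : Fin N → ℂ) :
    GamLC g k i i v = -(pder k (g i) v / (2 * g k v)) := by
  simp [GamLC, hki]

lemma GamLC_self_eq
    (hgoff : ∀ i j : Fin N, j ≠ i → ∀ u ∈ U, pder j (g i) u = 2 * γ i j u * g i u)
    {i j : Fin N} (hji : j ≠ i) {v : Fin N → ℂ} (hv : v ∈ U) (hg : g i v ≠ 0) :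
    GamLC g i i j v = γ i j v := by
  rw [GamLC_self, hgoff i j hji v hv]
  field_simp

lemma GamLC_of_ne_eq
    (hgoff : ∀ i j : Fin N, j ≠ i → ∀ u ∈ U, pder j (g i) u = 2 * γ i j u * g i u)
    {i k : Fin N} (hki : k ≠ i) {v : Fin N → ℂ} (hv : v ∈ U) :
    GamLC g k i i v = -(γ i k v * g i v / g k v) := by
  rw [GamLC_of_ne hki, hgoff i k hki v hv, mul_assoc, mul_div_mul_left _ _ two_ne_zero]

lemma pder_GamLC_of_ne
    (hgoff : ∀ i j : Fin N, j ≠ i → ∀ u ∈ U, pder j (g i) u = 2 * γ i j u * g i u)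
    {i j k : Fin N} (hji : j ≠ i) (hjk : j ≠ k) (hki : k ≠ i)
    (hU : IsOpen U) {u : Fin N → ℂ} (hu : u ∈ U) (hγ : DifferentiableAt ℂ (γ i k) u)
    (hgi : DifferentiableAt ℂ (g i) u) (hgk : DifferentiableAt ℂ (g k) u) (hgk0 : g k u ≠ 0) :
    pder j (GamLC g k i i) u
      = -((pder j (γ i k) u + 2 * γ i k u * (γ i j u - γ k j u)) * g i u / g k u) := by
  rw [pder_congr_of_eqOn hU hu fun v hv => GamLC_of_ne_eq hgoff hki hv, pder_neg,
    pder_div (f := fun v => γ i k v * g i v) (hγ.mul hgi) hgk hgk0,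
    pder_mul hγ hgi, hgoff i j hji u hu, hgoff k j hjk u hu]
  field_simp
  ring

lemma darbouxTsarev_of_star (hU : IsOpen U)
    (hhol : ∀ i j : Fin N, i ≠ j → DifferentiableOn ℂ (γ i j) U) (hstar : StarSystem U γ)
    (hghol : ∀ i, DifferentiableOn ℂ (g i) U) (hgne : ∀ i, ∀ u ∈ U, g i u ≠ 0)
    (hgoff : ∀ i j : Fin N, j ≠ i → ∀ u ∈ U, pder j (g i) u = 2 * γ i j u * g i u)
    {i j k : Fin N} (hij : i ≠ j) (hjk : j ≠ k) (hik : i ≠ k) {u : Fin N → ℂ} (hu : u ∈ U) :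
    -pder j (GamLC g k i i) u
      + GamLC g k i i u * GamLC g i i j u
      - GamLC g k j j u * GamLC g j i i u
      - GamLC g k k j u * GamLC g k i i u = 0 := by
  have hdiff : ∀ f : (Fin N → ℂ) → ℂ, DifferentiableOn ℂ f U → DifferentiableAt ℂ f u :=
    fun f hf => hf.differentiableAt (hU.mem_nhds hu)
  rw [pder_GamLC_of_ne hgoff hij.symm hjk hik.symm hU hu (hdiff _ (hhol i k hik))
      (hdiff _ (hghol i)) (hdiff _ (hghol k)) (hgne k u hu),
    hstar.1 i k j hik hjk.symm hij u hu, GamLC_of_ne_eq hgoff hik.symm hu,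
    GamLC_of_ne_eq hgoff hjk.symm hu, GamLC_of_ne_eq hgoff hij.symm hu,
    GamLC_self_eq hgoff hij.symm hu (hgne i u hu), GamLC_self_eq hgoff hjk hu (hgne k u hu)]
  field_simp [hgne i u hu, hgne j u hu, hgne k u hu]
  ring

lemma sum_pder_eq_zero_of_logDeriv
    (hgoff : ∀ i j : Fin N, j ≠ i → ∀ u ∈ U, pder j (g i) u = 2 * γ i j u * g i u)
    (hgdiag : ∀ i : Fin N, ∀ u ∈ U,
      pder i (g i) u = -2 * (∑ k ∈ Finset.univ.erase i, γ i k u) * g i u)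
    (i : Fin N) {u : Fin N → ℂ} (hu : u ∈ U) :
    ∑ k, pder k (g i) u = 0 := by
  rw [← Finset.add_sum_erase _ _ (Finset.mem_univ i), hgdiag i u hu,
    Finset.sum_congr rfl fun k hk => hgoff i k (Finset.ne_of_mem_erase hk) u hu,
    ← Finset.sum_mul, ← Finset.mul_sum]
  ring

end DiagonalMetric

theorem statement3_general {N : ℕ} (U : Set (Fin N → ℂ)) (hU : IsOpen U)
    (γ : Fin N → Fin N → (Fin N → ℂ) → ℂ)
    (hhol : ∀ i j : Fin N, i ≠ j → DifferentiableOn ℂ (γ i j) U)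
    (hstar : StarSystem U γ)
    (g : Fin N → (Fin N → ℂ) → ℂ)
    (hghol : ∀ i, DifferentiableOn ℂ (g i) U)
    (hgne : ∀ i, ∀ u ∈ U, g i u ≠ 0)
    (hgoff : ∀ i j : Fin N, j ≠ i → ∀ u ∈ U, pder j (g i) u = 2 * γ i j u * g i u)
    (hgdiag : ∀ i : Fin N, ∀ u ∈ U,
        pder i (g i) u = -2 * (∑ k ∈ Finset.univ.erase i, γ i k u) * g i u) :
    -- (i) the Darboux–Tsarev system
    (∀ i j k : Fin N, i ≠ j → j ≠ k → i ≠ k → ∀ u ∈ U,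
        -pder j (GamLC g k i i) u
          + GamLC g k i i u * GamLC g i i j u
          - GamLC g k j j u * GamLC g j i i u
          - GamLC g k k j u * GamLC g k i i u = 0) ∧
    -- (ii) the unit vector field is Killing
    (∀ i : Fin N, ∀ u ∈ U, ∑ k, pder k (g i) u = 0) :=
  ⟨fun _ _ _ hij hjk hik _ hu =>
    darbouxTsarev_of_star hU hhol hstar hghol hgne hgoff hij hjk hik hu,
   fun i _ hu => sum_pder_eq_zero_of_logDeriv hgoff hgdiag i hu⟩

/-- If `γ̃` solves (★) on `U` and the nonvanishing holomorphic functions `g_i`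
satisfy `∂_j g_i = 2 γ̃^i_j g_i` (`j ≠ i`) and `∂_i g_i = −2 (Σ_{k≠i} γ̃^i_k) g_i`, then the
Darboux–Tsarev system holds and the unit vector field is Killing. -/
theorem statement3 {N : ℕ} (hN : 2 ≤ N) (U : Set (Fin N → ℂ)) (hU : IsOpen U)
    (γ : Fin N → Fin N → (Fin N → ℂ) → ℂ)
    (hhol : ∀ i j : Fin N, i ≠ j → DifferentiableOn ℂ (γ i j) U)
    (hstar : StarSystem U γ)
    (g : Fin N → (Fin N → ℂ) → ℂ)
    (hghol : ∀ i, DifferentiableOn ℂ (g i) U)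
    (hgne : ∀ i, ∀ u ∈ U, g i u ≠ 0)
    (hgoff : ∀ i j : Fin N, j ≠ i → ∀ u ∈ U, pder j (g i) u = 2 * γ i j u * g i u)
    (hgdiag : ∀ i : Fin N, ∀ u ∈ U,
        pder i (g i) u = -2 * (∑ k ∈ Finset.univ.erase i, γ i k u) * g i u) :
    -- (i) the Darboux–Tsarev system
    (∀ i j k : Fin N, i ≠ j → j ≠ k → i ≠ k → ∀ u ∈ U,
        -pder j (GamLC g k i i) u
          + GamLC g k i i u * GamLC g i i j u
          - GamLC g k j j u * GamLC g j i i u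
          - GamLC g k k j u * GamLC g k i i u = 0) ∧
    -- (ii) the unit vector field is Killing
    (∀ i : Fin N, ∀ u ∈ U, ∑ k, pder k (g i) u = 0) :=
  statement3_general U hU γ hhol hstar g hghol hgne hgoff hgdiag

end
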